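/- arXiv:1809.04373 — 3 statements merged into one kernel-verified Lean document; each statement's English description precedes it below -/
import Mathlib

section
/- Let γ ∈ (0,2) and let φ : ℝ → ℝ be bounded and twice continuously differentiable with bounded first and second derivatives. Then for every x ∈ ℝ: (i) the limits Λ^γφ(x) := lim_{ε→0⁺} ∫_{|y|≥ε} (φ(x) − φ(x+y))/|y|^{1+γ} dy and Λ^γ(φ²)(x) := lim_{ε→0⁺} ∫_{|y|≥ε} (φ(x)² − φ(x+y)²)/|y|^{1+γ} dy both exist; (ii) the integral D_γ(φ)(x) := ∫_ℝ (φ(x) − φ(x+y))²/|y|^{1+γ} dy converges absolutely; and (iii) the pointwise identity 2·φ(x)·Λ^γφ(x) = Λ^γ(φ²)(x) + D_γ(φ)(x) holds. -/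
/-!
On the symmetric truncation sets `{ε ≤ |y|}` one may replace `φ x - φ (x + y)` by the
second difference `φ x - (φ (x + y) + φ (x - y)) / 2 = O(y ^ 2)`, so for `γ < 2` the principal
value is an absolutely convergent integral; likewise `(φ x - φ (x + y)) ^ 2 = O(y ^ 2)`, and both
numerators are bounded at infinity. The identity is then the pointwise relation
`a ^ 2 - b ^ 2 = 2 a (a - b) - (a - b) ^ 2`, integrated over each truncation set.
-/

open Real MeasureTheory Set Filter Topology

lemma integrableOn_div_abs_rpow_of_le {γ : ℝ} (hγ0 : 0 < γ) (hγ2 : γ < 2) {n : ℝ → ℝ}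
    (hn : AEStronglyMeasurable n) {s : Set ℝ} (hs : MeasurableSet s) {A B : ℝ}
    (hA : ∀ y ∈ s, |n y| ≤ A * y ^ 2) (hB : ∀ y ∈ s, |n y| ≤ B) :
    IntegrableOn (fun y => n y / |y| ^ (1 + γ)) s := by
  set h : ℝ → ℝ := fun r => if r ≤ 1 then A * r ^ (1 - γ) else B * r ^ (-(1 + γ))
  have hh : Integrable fun y : ℝ => h ‖y‖ := by
    rw [integrable_fun_norm_addHaar volume, Module.finrank_self,
      ← Ioc_union_Ioi_eq_Ioi zero_le_one]
    simp only [tsub_self, pow_zero, one_smul]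
    refine IntegrableOn.union ?_ ?_
    · rw [integrableOn_Ioc_iff_integrableOn_Ioo]
      refine IntegrableOn.congr_fun
        (((intervalIntegral.integrableOn_Ioo_rpow_iff (s := 1 - γ) one_pos).2
          (by linarith)).const_mul A)
        (fun r hr => ?_) measurableSet_Ioo
      simp [h, hr.2.le]
    · refine IntegrableOn.congr_fun
        ((integrableOn_Ioi_rpow_of_lt (a := -(1 + γ)) (by linarith) one_pos).const_mul B)
        (fun r hr => ?_) measurableSet_Ioi
      simp [h, not_le.2 (mem_Ioi.1 hr)]
  have hm : AEStronglyMeasurable (fun y => n y / |y| ^ (1 + γ)) :=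
    (hn.aemeasurable.div (measurable_abs.pow_const _).aemeasurable).aestronglyMeasurable
  refine hh.integrableOn.mono' hm.restrict ?_
  filter_upwards [ae_restrict_mem hs, ae_restrict_of_ae (Measure.ae_ne volume 0)] with y hys hy0
  have hpos : 0 < |y| := abs_pos.2 hy0
  rw [Real.norm_eq_abs, abs_div, abs_of_pos (rpow_pos_of_pos hpos _), div_eq_mul_inv,
    ← rpow_neg hpos.le]
  simp only [h, Real.norm_eq_abs]
  split_ifs
  · calc |n y| * |y| ^ (-(1 + γ)) ≤ A * |y| ^ (2 : ℝ) * |y| ^ (-(1 + γ)) := by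
          rw [rpow_two, sq_abs]; gcongr; exact hA y hys
      _ = A * |y| ^ (1 - γ) := by rw [mul_assoc, ← rpow_add hpos]; ring_nf
  · gcongr; exact hB y hys

lemma tendsto_setIntegral_le_abs {g : ℝ → ℝ} (hg : Integrable g) :
    Tendsto (fun ε => ∫ y in {y | ε ≤ |y|}, g y) (𝓝[>] 0) (𝓝 (∫ y, g y)) := by
  have hs (ε : ℝ) : MeasurableSet {y : ℝ | ε ≤ |y|} :=
    measurableSet_le measurable_const measurable_abs
  simp_rw [← integral_indicator (hs _)]
  refine tendsto_integral_filter_of_dominated_convergence (fun y => ‖g y‖)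
    (.of_forall fun ε => hg.aestronglyMeasurable.indicator (hs ε))
    (.of_forall fun ε => .of_forall fun y => norm_indicator_le_norm_self _ _) hg.norm ?_
  filter_upwards [Measure.ae_ne volume 0] with y hy
  refine tendsto_const_nhds.congr' ?_
  filter_upwards [Ioo_mem_nhdsGT (abs_pos.2 hy)] with ε hε
  exact (indicator_of_mem (show y ∈ {y : ℝ | ε ≤ |y|} from hε.2.le) g).symm

lemma setIntegral_eq_setIntegral_half_add_neg {f : ℝ → ℝ} {s : Set ℝ} (hs : -s = s)
    (hf : IntegrableOn f s) : ∫ y in s, f y = ∫ y in s, (f y + f (-y)) / 2 := by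
  have hneg := Measure.measurePreserving_neg (volume : Measure ℝ)
  have hpre : Neg.neg ⁻¹' s = s := by rw [neg_preimage, hs]
  have hf' : IntegrableOn (fun y => f (-y)) s := by
    have := (hneg.integrableOn_comp_preimage measurableEmbedding_neg).2 hf
    rwa [hpre] at this
  have hint : ∫ y in s, f (-y) = ∫ y in s, f y := by
    conv_lhs => rw [← hpre]
    exact hneg.setIntegral_preimage_emb measurableEmbedding_neg f s
  rw [integral_div, integral_add hf hf', hint]
  ring

lemma abs_sub_le_of_abs_deriv_le {f : ℝ → ℝ} (hf : Differentiable ℝ f) {C : ℝ}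
    (hC : ∀ x, |deriv f x| ≤ C) (u v : ℝ) : |f u - f v| ≤ C * |u - v| := by
  simpa only [Real.norm_eq_abs] using convex_univ.norm_image_sub_le_of_norm_deriv_le
    (fun t _ => hf t) (fun t _ => (Real.norm_eq_abs _).trans_le (hC t)) (mem_univ v) (mem_univ u)

lemma abs_add_add_sub_two_mul_le {f : ℝ → ℝ} (hf : Differentiable ℝ f) {C : ℝ}
    (hlip : ∀ u v, |deriv f u - deriv f v| ≤ C * |u - v|) (x y : ℝ) :
    |f (x + y) + f (x - y) - 2 * f x| ≤ 2 * C * y ^ 2 := by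
  have hC : 0 ≤ C := by simpa using (abs_nonneg _).trans (hlip 1 0)
  have hderiv (t : ℝ) : HasDerivAt (fun t => f (x + t) + f (x - t))
      (deriv f (x + t) - deriv f (x - t)) t := by
    rw [sub_eq_add_neg]
    exact ((hf _).hasDerivAt.comp_const_add x t).add ((hf _).hasDerivAt.comp_const_sub x t)
  have hbound : ∀ t ∈ uIcc 0 y, ‖deriv f (x + t) - deriv f (x - t)‖ ≤ 2 * C * |y| := by
    intro t ht
    have ht' : |t| ≤ |y| := by simpa using abs_sub_left_of_mem_uIcc ht
    calc ‖deriv f (x + t) - deriv f (x - t)‖ ≤ C * |x + t - (x - t)| := hlip _ _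
      _ = 2 * C * |t| := by rw [show x + t - (x - t) = 2 * t by ring, abs_mul, abs_two]; ring
      _ ≤ 2 * C * |y| := by gcongr
  have := (convex_uIcc 0 y).norm_image_sub_le_of_norm_hasDerivWithin_le
    (fun t _ => (hderiv t).hasDerivWithinAt) hbound left_mem_uIcc right_mem_uIcc
  calc |f (x + y) + f (x - y) - 2 * f x|
      = ‖(f (x + y) + f (x - y)) - (f (x + 0) + f (x - 0))‖ := by
        rw [Real.norm_eq_abs]; ring_nf
    _ ≤ 2 * C * |y| * ‖y - 0‖ := this
    _ = 2 * C * y ^ 2 := by rw [sub_zero, Real.norm_eq_abs, mul_assoc, abs_mul_abs_self]; ring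

section

variable {φ : ℝ → ℝ} {C γ : ℝ}

lemma integrable_sq_sub_div_abs_rpow (hγ0 : 0 < γ) (hγ2 : γ < 2) (hφ : Differentiable ℝ φ)
    (hbd : ∀ x, |φ x| ≤ C) (hbd' : ∀ x, |deriv φ x| ≤ C) (x : ℝ) :
    Integrable fun y => (φ x - φ (x + y)) ^ 2 / |y| ^ (1 + γ) := by
  have hc : Continuous φ := hφ.continuous
  refine integrableOn_univ.1 <| integrableOn_div_abs_rpow_of_le hγ0 hγ2
    (by fun_prop : Continuous fun y => (φ x - φ (x + y)) ^ 2).aestronglyMeasurable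
    MeasurableSet.univ (A := C ^ 2) (B := (C + C) ^ 2) (fun y _ => ?_) (fun y _ => ?_)
  · have := abs_sub_le_of_abs_deriv_le hφ hbd' x (x + y)
    rw [show x - (x + y) = -y by ring, abs_neg] at this
    rw [abs_pow, ← sq_abs y, ← mul_pow]
    gcongr
  · rw [abs_pow]
    gcongr
    exact (abs_sub _ _).trans (add_le_add (hbd _) (hbd _))

lemma integrable_sub_midpoint_div_abs_rpow (hγ0 : 0 < γ) (hγ2 : γ < 2) (hφ : ContDiff ℝ 2 φ)
    (hbd : ∀ x, |φ x| ≤ C) (hbd'' : ∀ x, |deriv (deriv φ) x| ≤ C) (x : ℝ) :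
    Integrable fun y => (φ x - (φ (x + y) + φ (x - y)) / 2) / |y| ^ (1 + γ) := by
  have hc : Continuous φ := hφ.continuous
  refine integrableOn_univ.1 <| integrableOn_div_abs_rpow_of_le hγ0 hγ2
    (by fun_prop : Continuous fun y => φ x - (φ (x + y) + φ (x - y)) / 2).aestronglyMeasurable
    MeasurableSet.univ (A := C) (B := C + C) (fun y _ => ?_) (fun y _ => ?_)
  · have := abs_add_add_sub_two_mul_le (hφ.differentiable (by norm_num))
      (abs_sub_le_of_abs_deriv_le hφ.differentiable_deriv_two hbd'') x y
    rw [show φ x - (φ (x + y) + φ (x - y)) / 2 = -(φ (x + y) + φ (x - y) - 2 * φ x) / 2 by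
      ring, abs_div, abs_neg, abs_two]
    linarith
  · have h₀ := abs_le.1 (hbd x)
    have h₁ := abs_le.1 (hbd (x + y))
    have h₂ := abs_le.1 (hbd (x - y))
    exact abs_le.2 ⟨by linarith, by linarith⟩

lemma integrableOn_sub_div_abs_rpow (hγ0 : 0 < γ) (hγ2 : γ < 2) (hφ : Continuous φ)
    (hbd : ∀ x, |φ x| ≤ C) (x : ℝ) {ε : ℝ} (hε : 0 < ε) :
    IntegrableOn (fun y => (φ x - φ (x + y)) / |y| ^ (1 + γ)) {y | ε ≤ |y|} := by
  have hC : 0 ≤ C := (abs_nonneg _).trans (hbd 0)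
  have hbd₂ (y : ℝ) : |φ x - φ (x + y)| ≤ C + C :=
    (abs_sub _ _).trans (add_le_add (hbd _) (hbd _))
  -- away from the origin a bounded numerator is `O(y ^ 2)`
  refine integrableOn_div_abs_rpow_of_le hγ0 hγ2
    (by fun_prop : Continuous fun y => φ x - φ (x + y)).aestronglyMeasurable
    (measurableSet_le measurable_const measurable_abs) (A := (C + C) / ε ^ 2)
    (fun y (hy : ε ≤ |y|) => ?_) (fun y _ => hbd₂ y)
  calc |φ x - φ (x + y)| ≤ (C + C) / ε ^ 2 * ε ^ 2 := by
        rw [div_mul_cancel₀ _ (by positivity)]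
        exact hbd₂ y
    _ ≤ (C + C) / ε ^ 2 * y ^ 2 := by rw [← sq_abs y]; gcongr

lemma tendsto_setIntegral_sub_div_abs_rpow (hγ0 : 0 < γ) (hγ2 : γ < 2) (hφ : ContDiff ℝ 2 φ)
    (hbd : ∀ x, |φ x| ≤ C) (hbd'' : ∀ x, |deriv (deriv φ) x| ≤ C) (x : ℝ) :
    Tendsto (fun ε => ∫ y in {y | ε ≤ |y|}, (φ x - φ (x + y)) / |y| ^ (1 + γ)) (𝓝[>] 0)
      (𝓝 (∫ y, (φ x - (φ (x + y) + φ (x - y)) / 2) / |y| ^ (1 + γ))) := by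
  refine (tendsto_setIntegral_le_abs
    (integrable_sub_midpoint_div_abs_rpow hγ0 hγ2 hφ hbd hbd'' x)).congr' ?_
  filter_upwards [self_mem_nhdsWithin] with ε (hε : 0 < ε)
  rw [setIntegral_eq_setIntegral_half_add_neg (by ext; simp)
    (integrableOn_sub_div_abs_rpow hγ0 hγ2 hφ.continuous hbd x hε)]
  congr with y
  simp only [abs_neg, ← sub_eq_add_neg]
  ring

end

/-- Pointwise identity `2 φ(x) Λ^γ φ(x) = Λ^γ(φ²)(x) + D_γ(φ)(x)` for the fractional
Laplacian defined via the principal value singular integral, for bounded `C²` functions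
with bounded first and second derivatives. -/
theorem statement0 (γ : ℝ) (hγ : γ ∈ Set.Ioo (0:ℝ) 2)
    (φ : ℝ → ℝ) (hφ : ContDiff ℝ 2 φ) (C : ℝ)
    (hbd : ∀ x, |φ x| ≤ C) (hbd' : ∀ x, |deriv φ x| ≤ C)
    (hbd'' : ∀ x, |deriv (deriv φ) x| ≤ C) (x : ℝ) :
    ∃ L₁ L₂ : ℝ,
      Tendsto (fun ε : ℝ =>
          ∫ y in {y : ℝ | ε ≤ |y|}, (φ x - φ (x + y)) / |y| ^ (1 + γ))
        (nhdsWithin 0 (Set.Ioi 0)) (nhds L₁) ∧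
      Tendsto (fun ε : ℝ =>
          ∫ y in {y : ℝ | ε ≤ |y|}, ((φ x) ^ 2 - (φ (x + y)) ^ 2) / |y| ^ (1 + γ))
        (nhdsWithin 0 (Set.Ioi 0)) (nhds L₂) ∧
      Integrable (fun y : ℝ => (φ x - φ (x + y)) ^ 2 / |y| ^ (1 + γ)) ∧
      2 * φ x * L₁ = L₂ + ∫ y : ℝ, (φ x - φ (x + y)) ^ 2 / |y| ^ (1 + γ) := by
  obtain ⟨hγ0, hγ2⟩ := hγ
  have hD := integrable_sq_sub_div_abs_rpow hγ0 hγ2 (hφ.differentiable (by norm_num)) hbd hbd' x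
  have hΛ := tendsto_setIntegral_sub_div_abs_rpow hγ0 hγ2 hφ hbd hbd'' x
  refine ⟨_, _, hΛ, ((hΛ.const_mul (2 * φ x)).sub (tendsto_setIntegral_le_abs hD)).congr' ?_,
    hD, by ring⟩
  filter_upwards [self_mem_nhdsWithin] with ε (hε : 0 < ε)
  have hΛε := integrableOn_sub_div_abs_rpow hγ0 hγ2 hφ.continuous hbd x hε
  rw [← integral_const_mul, ← integral_sub (hΛε.const_mul _) hD.integrableOn]
  congr with y
  ring
end

section
/- Let n ≥ 1, let K ⊂ ℝⁿ be compact, let T > 0, and let f : K × (0,T) → [0,∞) be such that: (a) for every λ ∈ K the function t ↦ f(λ,t) is differentiable on (0,T) with continuous derivative t ↦ ∂_t f(λ,t); (b) the families {f(λ,·)}_{λ∈K} and {∂_t f(λ,·)}_{λ∈K} are uniformly equicontinuous in t, i.e. for every ε > 0 there is δ > 0 such that for all λ ∈ K and all s,t ∈ (0,T) with |t−s| < δ one has |f(λ,t) − f(λ,s)| < ε and |∂_t f(λ,t) − ∂_t f(λ,s)| < ε; (c) for every t ∈ (0,T) the functions λ ↦ f(λ,t) and λ ↦ ∂_t f(λ,t)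 are continuous on K. Define F(t) = sup_{λ∈K} f(λ,t). Then for almost every t ∈ (0,T), F is differentiable at t and there exists λ* = λ*(t) ∈ K such that simultaneously F(t) = f(λ*,t) and F′(t) = ∂_t f(λ*,t). -/
open Real MeasureTheory Set Filter Topology

/-- Lemma B.1 of Constantin–Tarfulea–Vicol (Lemma 2.3 of the paper): for a.e. `t`,
the supremum `F(t) = sup_{λ ∈ K} f(λ, t)` is differentiable and is attained, together
with its derivative, at some maximizing parameter `λ* ∈ K`. -/
theorem statement1 (n : ℕ) (hn : 1 ≤ n)
    (K : Set (EuclideanSpace ℝ (Fin n))) (hK : IsCompact K) (hKne : K.Nonempty)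
    (T : ℝ) (hT : 0 < T)
    (f f' : EuclideanSpace ℝ (Fin n) → ℝ → ℝ)
    (hpos : ∀ lam ∈ K, ∀ t ∈ Set.Ioo (0:ℝ) T, 0 ≤ f lam t)
    (hderiv : ∀ lam ∈ K, ∀ t ∈ Set.Ioo (0:ℝ) T, HasDerivAt (f lam) (f' lam t) t)
    (hderivcont : ∀ lam ∈ K, ContinuousOn (f' lam) (Set.Ioo 0 T))
    (hequi : ∀ ε > (0:ℝ), ∃ δ > (0:ℝ), ∀ lam ∈ K, ∀ s ∈ Set.Ioo (0:ℝ) T,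
      ∀ t ∈ Set.Ioo (0:ℝ) T, |t - s| < δ →
        |f lam t - f lam s| < ε ∧ |f' lam t - f' lam s| < ε)
    (hcont : ∀ t ∈ Set.Ioo (0:ℝ) T,
      ContinuousOn (fun lam => f lam t) K ∧ ContinuousOn (fun lam => f' lam t) K)
    (F : ℝ → ℝ) (hF : ∀ t, F t = sSup ((fun lam => f lam t) '' K)) :
    ∀ᵐ t ∂(volume.restrict (Set.Ioo (0:ℝ) T)), ∃ lam ∈ K,
      F t = f lam t ∧ HasDerivAt F (f' lam t) t := by
  classical
  -- existence of a maximizer at each time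
  have hmax : ∀ t ∈ Set.Ioo (0:ℝ) T, ∃ lam ∈ K,
      (∀ μ ∈ K, f μ t ≤ f lam t) ∧ F t = f lam t := by
    intro t ht
    obtain ⟨lam, hlam, hmx⟩ := hK.exists_isMaxOn hKne (hcont t ht).1
    refine ⟨lam, hlam, fun μ hμ => hmx hμ, ?_⟩
    rw [hF t]
    refine IsGreatest.csSup_eq ⟨⟨lam, hlam, rfl⟩, ?_⟩
    rintro y ⟨μ, hμ, rfl⟩
    exact hmx hμ
  have hle : ∀ t ∈ Set.Ioo (0:ℝ) T, ∀ μ ∈ K, f μ t ≤ F t := by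
    intro t ht μ hμ
    obtain ⟨lam, hlam, hm, hFt⟩ := hmax t ht
    rw [hFt]; exact hm μ hμ
  -- local differentiability on closed subintervals
  have key : ∀ a b : ℝ, 0 < a → b < T →
      ∀ᵐ t ∂(volume : Measure ℝ), t ∈ Set.Ioo a b → DifferentiableAt ℝ F t := by
    intro a b ha hb
    have hsub : Set.Icc a b ⊆ Set.Ioo 0 T := fun x hx =>
      ⟨lt_of_lt_of_le ha hx.1, lt_of_le_of_lt hx.2 hb⟩
    -- joint continuity of f' on K × [a,b]
    have hjoint : ContinuousOn (fun p : EuclideanSpace ℝ (Fin n) × ℝ => f' p.1 p.2)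
        (K ×ˢ Set.Icc a b) := by
      rw [Metric.continuousOn_iff]
      rintro ⟨μ, s⟩ ⟨hμ, hs⟩ ε hε
      obtain ⟨δ₁, hδ₁, hδ⟩ := hequi (ε/2) (by linarith)
      have hs' : s ∈ Set.Ioo (0:ℝ) T := hsub hs
      obtain ⟨δ₂, hδ₂, hδ'⟩ := Metric.continuousOn_iff.1 (hcont s hs').2 μ hμ (ε/2) (by linarith)
      refine ⟨min δ₁ δ₂, lt_min hδ₁ hδ₂, ?_⟩
      rintro ⟨lam, t⟩ ⟨hlam, ht⟩ hd
      rw [Prod.dist_eq, max_lt_iff] at hd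
      have h1 : |f' lam t - f' lam s| < ε/2 :=
        (hδ lam hlam s hs' t (hsub ht)
          (by rw [← Real.dist_eq]; exact lt_of_lt_of_le hd.2 (min_le_left _ _))).2
      have h2 : dist (f' lam s) (f' μ s) < ε/2 :=
        hδ' lam hlam (lt_of_lt_of_le hd.1 (min_le_right _ _))
      calc dist (f' lam t) (f' μ s)
          ≤ dist (f' lam t) (f' lam s) + dist (f' lam s) (f' μ s) := dist_triangle _ _ _
        _ < ε/2 + ε/2 := by rw [Real.dist_eq]; exact add_lt_add h1 h2
        _ = ε := by ring
    obtain ⟨M, hM⟩ := (hK.prod isCompact_Icc).exists_bound_of_continuousOn hjoint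
    set C : NNReal := Real.toNNReal M with hC
    -- each f lam is Lipschitz on [a,b]
    have hflip : ∀ lam ∈ K, LipschitzOnWith C (f lam) (Set.Icc a b) := by
      intro lam hlam
      refine (convex_Icc a b).lipschitzOnWith_of_nnnorm_hasDerivWithin_le
        (f' := fun t => f' lam t)
        (fun x hx => (hderiv lam hlam x (hsub hx)).hasDerivWithinAt) ?_
      intro x hx
      rw [← NNReal.coe_le_coe, coe_nnnorm, hC, Real.coe_toNNReal']
      exact le_trans (hM (lam, x) ⟨hlam, hx⟩) (le_max_left _ _)
    -- F is Lipschitz on [a,b]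
    have hFlip : LipschitzOnWith C F (Set.Icc a b) := by
      rw [lipschitzOnWith_iff_dist_le_mul]
      have key2 : ∀ u ∈ Set.Icc a b, ∀ v ∈ Set.Icc a b, F u - F v ≤ C * dist u v := by
        intro u hu v hv
        obtain ⟨lam, hlam, _, hFu⟩ := hmax u (hsub hu)
        have h1 : dist (f lam u) (f lam v) ≤ C * dist u v :=
          lipschitzOnWith_iff_dist_le_mul.1 (hflip lam hlam) u hu v hv
        have h2 : f lam v ≤ F v := hle v (hsub hv) lam hlam
        rw [Real.dist_eq] at h1
        have h3 : f lam u - f lam v ≤ |f lam u - f lam v| := le_abs_self _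
        rw [hFu]
        linarith
      intro x hx y hy
      rw [Real.dist_eq]
      refine abs_sub_le_iff.2 ⟨key2 x hx y hy, ?_⟩
      have := key2 y hy x hx
      rwa [dist_comm] at this
    obtain ⟨g, hg, hFg⟩ := hFlip.extend_real
    filter_upwards [hg.ae_differentiableAt (μ := (volume : Measure ℝ))] with t hdg ht
    have heq : F =ᶠ[nhds t] g :=
      Filter.eventuallyEq_of_mem (isOpen_Ioo.mem_nhds ht)
        (fun x hx => hFg (Set.Ioo_subset_Icc_self hx))
    exact heq.differentiableAt_iff.2 hdg
  -- almost everywhere differentiability on (0,T)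
  have hcov : ∀ᵐ t ∂(volume : Measure ℝ),
      t ∈ Set.Ioo (0:ℝ) T → DifferentiableAt ℝ F t := by
    have hall : ∀ᵐ t ∂(volume : Measure ℝ), ∀ k : ℕ,
        t ∈ Set.Ioo (T/(k+2)) (T - T/(k+2)) → DifferentiableAt ℝ F t := by
      rw [MeasureTheory.ae_all_iff]
      intro k
      refine key _ _ (by positivity) ?_
      have : 0 < T/((k:ℝ)+2) := by positivity
      linarith
    filter_upwards [hall] with t h ht
    have hm : 0 < min t (T - t) := lt_min ht.1 (by linarith [ht.2])
    obtain ⟨k, hk⟩ := exists_nat_gt (T / min t (T - t))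
    have hk2 : T / min t (T - t) < (k:ℝ) + 2 := lt_of_lt_of_le hk (by linarith)
    have h2 : T / ((k:ℝ)+2) < min t (T - t) := by
      rw [div_lt_iff₀ (by positivity)]
      have := (div_lt_iff₀ hm).1 hk2
      linarith [this]
    have hmin1 : min t (T - t) ≤ t := min_le_left _ _
    have hmin2 : min t (T - t) ≤ T - t := min_le_right _ _
    exact h k ⟨by linarith, by linarith⟩
  -- conclusion
  rw [MeasureTheory.ae_restrict_iff' measurableSet_Ioo]
  filter_upwards [hcov] with t hdiff ht
  obtain ⟨lam, hlam, _, hFt⟩ := hmax t ht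
  have hd : HasDerivAt F (deriv F t) t := (hdiff ht).hasDerivAt
  have hgd : HasDerivAt (fun s => F s - f lam s) (deriv F t - f' lam t) t :=
    hd.sub (hderiv lam hlam t ht)
  have hmin : IsLocalMin (fun s => F s - f lam s) t := by
    have hmem : Set.Ioo (0:ℝ) T ∈ nhds t := isOpen_Ioo.mem_nhds ht
    filter_upwards [hmem] with s hs
    have := hle s hs lam hlam
    show F t - f lam t ≤ F s - f lam s
    rw [hFt]
    linarith
  have hzero := hmin.hasDerivAt_eq_zero hgd
  have heq : deriv F t = f' lam t := by linarith [sub_eq_zero.1 hzero]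
  exact ⟨lam, hlam, hFt, heq ▸ hd⟩
end

section
/- Let γ ∈ (0,1), α ∈ (0,1), ξ ≥ 0, let θ : ℝ → ℝ be bounded, Lipschitz and 2π-periodic, let h ≠ 0, x ∈ ℝ, and let V > 0 satisfy |θ(x′+h′) − θ(x′)| ≤ V·(ξ² + h′²)^{α/2} for all x′, h′ ∈ ℝ. Let R > 0 satisfy R ≥ 4|h|, and let χ : ℝ → ℝ be continuously differentiable with χ(z) = 0 for |z| ≤ 1, χ(z) = 1 for |z| ≥ 2 and |χ′| ≤ 2. Then, writing δ_hθ(x) = θ(x+h) − θ(x), there exist absolute constants c₁, c₂ ≥ 1 (with c₂ allowed to depend on a positive lower bound γ₀ ≤ γ) such that | ∫_ℝ (θ(x+y) − θ(x)) · ( g(y−h) − g(y) ) dy | ≤ c₁·c₂·(|h|·V/R^γ)·( ξ^α/R + 1/R^{1−α} ), where g(y) = χ(|y|/R)/|y|^{1+γ} for y ≠ 0 and g(0) = 0, and the integral converges absolutely. -/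
open Real MeasureTheory Set

/-! Write `g = truncKernel χ R γ`. Since `4|h| ≤ R`, both `g (y - h)` and `g y` vanish for
`|y| < 3R/4`. Otherwise the segment from `y - h` to `y` stays in `|ζ| ≥ 2|y|/3`, and the mean
value theorem with `|g'(ζ)| ≤ 8|ζ|^{-(2+γ)}` (valid for all `ζ ≠ 0`, because `χ'` vanishes
for `|t| > 2` and so `|t χ'(t)| ≤ 4`) gives `|g(y - h) - g(y)| ≤ 27|h||y|^{-(2+γ)}`. With
`|θ(x+y) - θ(x)| ≤ V(ξ^α + |y|^α)` the integrand is dominated by a power tail on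
`|y| ≥ 3R/4`, integrated explicitly; the factor `1/γ` comes from `∫ |y|^{α-(2+γ)}`. -/

structure IsCutoff (χ : ℝ → ℝ) : Prop where
  contDiff : ContDiff ℝ 1 χ
  eq_zero : ∀ z, |z| ≤ 1 → χ z = 0
  eq_one : ∀ z, 2 ≤ |z| → χ z = 1
  abs_deriv_le : ∀ z, |deriv χ z| ≤ 2

namespace IsCutoff

variable {χ : ℝ → ℝ}

theorem differentiable (hχ : IsCutoff χ) : Differentiable ℝ χ :=
  hχ.contDiff.differentiable one_ne_zero

theorem lipschitzWith (hχ : IsCutoff χ) : LipschitzWith 2 χ :=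
  lipschitzWith_of_nnnorm_deriv_le hχ.differentiable fun z => by
    rw [← NNReal.coe_le_coe, coe_nnnorm, Real.norm_eq_abs]
    exact hχ.abs_deriv_le z

theorem abs_le_two (hχ : IsCutoff χ) (z : ℝ) : |χ z| ≤ 2 := by
  rcases le_or_gt 2 |z| with hz | hz
  · rw [hχ.eq_one z hz]; norm_num
  have hhalf : χ (z / 2) = 0 := hχ.eq_zero _ (by rw [abs_div, abs_two]; linarith)
  calc |χ z| = dist (χ z) (χ (z / 2)) := by rw [Real.dist_eq, hhalf, sub_zero]
    _ ≤ 2 * dist z (z / 2) := hχ.lipschitzWith.dist_le_mul z (z / 2)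
    _ = |z| := by rw [Real.dist_eq, show z - z / 2 = z / 2 by ring, abs_div, abs_two]; ring
    _ ≤ 2 := hz.le

theorem deriv_eq_zero (hχ : IsCutoff χ) {t : ℝ} (ht : 2 < |t|) : deriv χ t = 0 := by
  have hone : χ =ᶠ[nhds t] fun _ => 1 := by
    filter_upwards [(isOpen_lt continuous_const continuous_abs).mem_nhds ht] with u hu
    exact hχ.eq_one u (le_of_lt hu)
  rw [hone.deriv_eq, deriv_const]

theorem abs_mul_abs_deriv_le (hχ : IsCutoff χ) (t : ℝ) : |t| * |deriv χ t| ≤ 4 := by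
  rcases le_or_gt |t| 2 with ht | ht
  · nlinarith [hχ.abs_deriv_le t, abs_nonneg t, abs_nonneg (deriv χ t)]
  · rw [hχ.deriv_eq_zero ht, abs_zero, mul_zero]; norm_num

end IsCutoff

theorem setIntegral_abs_rpow_tail {p a : ℝ} (hp : p < -1) (ha : 0 < a) :
    ∫ y in {y : ℝ | a ≤ |y|}, |y| ^ p = 2 * (-a ^ (p + 1) / (p + 1)) := by
  have hS : MeasurableSet {y : ℝ | a ≤ |y|} := measurableSet_le measurable_const measurable_abs
  rw [← integral_indicator hS]
  have hcomp : ({y : ℝ | a ≤ |y|}.indicator fun y => |y| ^ p)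
      = fun y => (Ici a).indicator (· ^ p) |y| := by
    ext y; simp [indicator]
  rw [hcomp, integral_comp_abs, setIntegral_indicator measurableSet_Ici,
    inter_eq_right.2 (Ici_subset_Ioi.2 ha), integral_Ici_eq_integral_Ioi,
    integral_Ioi_rpow_of_lt hp ha]

theorem integrableOn_abs_rpow_tail {p a : ℝ} (hp : p < -1) (ha : 0 < a) :
    IntegrableOn (fun y : ℝ => |y| ^ p) {y : ℝ | a ≤ |y|} := by
  have hS : MeasurableSet {y : ℝ | a ≤ |y|} := measurableSet_le measurable_const measurable_abs
  refine (integrable_indicator_iff hS).1 (Integrable.of_integral_ne_zero ?_)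
  rw [integral_indicator hS, setIntegral_abs_rpow_tail hp ha]
  have : 0 < -a ^ (p + 1) / (p + 1) :=
    div_pos_of_neg_of_neg (neg_neg_of_pos (rpow_pos_of_pos ha _)) (by linarith)
  positivity

noncomputable def truncKernel (χ : ℝ → ℝ) (R γ y : ℝ) : ℝ := χ (|y| / R) / |y| ^ (1 + γ)

section truncKernel

variable {χ : ℝ → ℝ} {R γ : ℝ}

theorem measurable_truncKernel (hχ : Continuous χ) : Measurable (truncKernel χ R γ) := by
  unfold truncKernel
  fun_prop

theorem truncKernel_eq_zero (hχ : IsCutoff χ) (hR : 0 < R) {y : ℝ} (hy : |y| ≤ R) :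
    truncKernel χ R γ y = 0 := by
  rw [truncKernel, hχ.eq_zero _ (by rwa [abs_div, abs_abs, abs_of_pos hR, div_le_one hR]),
    zero_div]

theorem hasDerivAt_truncKernel (hχ : Differentiable ℝ χ) {y : ℝ} (hy : y ≠ 0) :
    HasDerivAt (truncKernel χ R γ)
      (SignType.sign y * (|y| / R * deriv χ (|y| / R) - (1 + γ) * χ (|y| / R))
        * |y| ^ (-(2 + γ))) y := by
  have habs := hasDerivAt_abs hy
  have hpow := habs.rpow_const (p := -(1 + γ)) (Or.inl (abs_ne_zero.2 hy))
  have hprod := (((hχ _).hasDerivAt).comp y (habs.div_const R)).mul hpow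
  have hfun : truncKernel χ R γ = fun y => χ (|y| / R) * |y| ^ (-(1 + γ)) := by
    ext z; rw [truncKernel, rpow_neg (abs_nonneg z), div_eq_mul_inv]
  have hexp : |y| ^ (-(1 + γ)) = |y| * |y| ^ (-(2 + γ)) := by
    rw [show -(1 + γ) = 1 + -(2 + γ) by ring, rpow_add (abs_pos.2 hy), rpow_one]
  rw [hfun]
  refine hprod.congr_deriv ?_
  rw [hexp, show -(1 + γ) - 1 = -(2 + γ) by ring, Function.comp_apply]
  ring

theorem abs_deriv_truncKernel_le (hχ : IsCutoff χ) (hγ0 : 0 ≤ γ) (hγ1 : γ ≤ 1)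
    {y : ℝ} (hy : y ≠ 0) : |deriv (truncKernel χ R γ) y| ≤ 8 * |y| ^ (-(2 + γ)) := by
  set t := |y| / R
  have hsign : |(SignType.sign y : ℝ)| = 1 := by rcases hy.lt_or_gt with h | h <;> simp [h]
  have hfactor : |t * deriv χ t - (1 + γ) * χ t| ≤ 8 :=
    calc |t * deriv χ t - (1 + γ) * χ t| ≤ |t| * |deriv χ t| + (1 + γ) * |χ t| := by
          refine (abs_sub _ _).trans_eq ?_
          rw [abs_mul, abs_mul, abs_of_nonneg (by linarith : (0 : ℝ) ≤ 1 + γ)]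
      _ ≤ 4 + 2 * 2 := by
          gcongr
          · exact hχ.abs_mul_abs_deriv_le t
          · linarith
          · exact hχ.abs_le_two t
      _ = 8 := by norm_num
  rw [(hasDerivAt_truncKernel hχ.differentiable hy).deriv, abs_mul, abs_mul, hsign, one_mul,
    abs_of_nonneg (rpow_nonneg (abs_nonneg y) _)]
  gcongr

theorem abs_truncKernel_sub_le (hχ : IsCutoff χ) (hγ0 : 0 ≤ γ) (hγ1 : γ ≤ 1)
    {h y : ℝ} (hy : y ≠ 0) (hhy : 3 * |h| ≤ |y|) :
    |truncKernel χ R γ (y - h) - truncKernel χ R γ y| ≤ 27 * |h| * |y| ^ (-(2 + γ)) := by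
  have hy0 : 0 < |y| := abs_pos.2 hy
  have hseg : ∀ ζ ∈ uIcc (y - h) y, 2 * |y| / 3 ≤ |ζ| := fun ζ hζ => by
    have hdist := abs_sub_right_of_mem_uIcc hζ
    rw [sub_sub_cancel] at hdist
    linarith [abs_sub_abs_le_abs_sub y ζ]
  have hne : ∀ ζ ∈ uIcc (y - h) y, ζ ≠ 0 := fun ζ hζ =>
    abs_pos.1 (by linarith [hseg ζ hζ])
  have hderiv : ∀ ζ ∈ uIcc (y - h) y,
      ‖deriv (truncKernel χ R γ) ζ‖ ≤ 8 * (2 * |y| / 3) ^ (-(2 + γ)) := fun ζ hζ => by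
    rw [Real.norm_eq_abs]
    refine (abs_deriv_truncKernel_le hχ hγ0 hγ1 (hne ζ hζ)).trans ?_
    gcongr 8 * ?_
    exact rpow_le_rpow_of_nonpos (by positivity) (hseg ζ hζ) (by linarith)
  have hmvt := (convex_uIcc (y - h) y).norm_image_sub_le_of_norm_deriv_le
    (fun ζ hζ => (hasDerivAt_truncKernel hχ.differentiable (hne ζ hζ)).differentiableAt)
    hderiv left_mem_uIcc right_mem_uIcc
  have hconst : ((2 : ℝ) / 3) ^ (-(2 + γ)) ≤ 27 / 8 :=
    calc ((2 : ℝ) / 3) ^ (-(2 + γ)) ≤ (2 / 3) ^ (-3 : ℝ) :=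
          rpow_le_rpow_of_exponent_ge (by norm_num) (by norm_num) (by linarith)
      _ = 27 / 8 := by norm_num [rpow_neg]
  rw [Real.norm_eq_abs, Real.norm_eq_abs, sub_sub_cancel, show 2 * |y| / 3 = 2 / 3 * |y| by ring,
    mul_rpow (by norm_num) (abs_nonneg y)] at hmvt
  rw [abs_sub_comm]
  refine hmvt.trans ?_
  have : 0 ≤ |y| ^ (-(2 + γ)) := rpow_nonneg (abs_nonneg y) _
  nlinarith [abs_nonneg h, mul_nonneg this (abs_nonneg h)]

end truncKernel

theorem sq_add_sq_rpow_half_le {ξ y α : ℝ} (hξ : 0 ≤ ξ) (hα0 : 0 ≤ α) (hα2 : α ≤ 2) :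
    (ξ ^ 2 + y ^ 2) ^ (α / 2) ≤ ξ ^ α + |y| ^ α := by
  have hsq : ∀ t : ℝ, 0 ≤ t → (t ^ 2) ^ (α / 2) = t ^ α := fun t ht => by
    rw [← rpow_natCast, ← rpow_mul ht]; norm_num [mul_div_cancel₀]
  rw [← sq_abs y, ← hsq ξ hξ, ← hsq |y| (abs_nonneg y)]
  exact rpow_add_le_add_rpow (sq_nonneg _) (sq_nonneg _) (by linarith) (by linarith)

theorem setIntegral_abs_rpow_tail_le {p R : ℝ} (hp : p < -1) (hp3 : -3 ≤ p) (hR : 0 < R) :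
    ∫ y in {y : ℝ | 3 * R / 4 ≤ |y|}, |y| ^ p ≤ 4 * (R ^ (p + 1) / -(p + 1)) := by
  have hconst : ((3 : ℝ) / 4) ^ (p + 1) ≤ 2 :=
    calc ((3 : ℝ) / 4) ^ (p + 1) ≤ (3 / 4) ^ (-2 : ℝ) :=
          rpow_le_rpow_of_exponent_ge (by norm_num) (by norm_num) (by linarith)
      _ ≤ 2 := by norm_num [rpow_neg]
  have hq : 0 < -(p + 1) := by linarith
  rw [setIntegral_abs_rpow_tail hp (by positivity), show 3 * R / 4 = 3 / 4 * R by ring,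
    mul_rpow (by norm_num) hR.le, neg_div, ← div_neg, mul_div_assoc]
  have : 0 ≤ R ^ (p + 1) / -(p + 1) := by positivity
  nlinarith

theorem integrableOn_and_setIntegral_tail_le {R γ α ξ : ℝ} (hR : 0 < R) (hγ0 : 0 < γ)
    (hγ1 : γ ≤ 1) (hα0 : 0 ≤ α) (hα1 : α ≤ 1) (hξ : 0 ≤ ξ) :
    IntegrableOn (fun y : ℝ => ξ ^ α * |y| ^ (-(2 + γ)) + |y| ^ (α - (2 + γ)))
        {y : ℝ | 3 * R / 4 ≤ |y|} ∧
      ∫ y in {y : ℝ | 3 * R / 4 ≤ |y|}, (ξ ^ α * |y| ^ (-(2 + γ)) + |y| ^ (α - (2 + γ)))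
        ≤ 4 / γ * ((R ^ γ)⁻¹ * (ξ ^ α / R + 1 / R ^ (1 - α))) := by
  have hp₁ : -(2 + γ) < -1 := by linarith
  have hp₂ : α - (2 + γ) < -1 := by linarith
  have hint₁ := (integrableOn_abs_rpow_tail hp₁ (by positivity : 0 < 3 * R / 4)).const_mul (ξ ^ α)
  have hint₂ := integrableOn_abs_rpow_tail hp₂ (by positivity : 0 < 3 * R / 4)
  refine ⟨hint₁.add hint₂, ?_⟩
  rw [integral_add hint₁ hint₂, integral_const_mul]
  have hI₁ := setIntegral_abs_rpow_tail_le hp₁ (by linarith) hR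
  have hI₂ := setIntegral_abs_rpow_tail_le hp₂ (by linarith) hR
  rw [show -(2 + γ) + 1 = -(γ + 1) by ring, rpow_neg hR.le, rpow_add hR, rpow_one,
    show -(-(γ + 1)) = γ + 1 by ring] at hI₁
  rw [show α - (2 + γ) + 1 = -(γ + (1 - α)) by ring, rpow_neg hR.le, rpow_add hR,
    show -(-(γ + (1 - α))) = γ + (1 - α) by ring] at hI₂
  have hRγ : 0 < R ^ γ := rpow_pos_of_pos hR γ
  have hR1α : 0 < R ^ (1 - α) := rpow_pos_of_pos hR _
  have hξα : 0 ≤ ξ ^ α := rpow_nonneg hξ α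
  calc (ξ ^ α * ∫ y in {y : ℝ | 3 * R / 4 ≤ |y|}, |y| ^ (-(2 + γ)))
        + ∫ y in {y : ℝ | 3 * R / 4 ≤ |y|}, |y| ^ (α - (2 + γ))
      ≤ ξ ^ α * (4 * ((R ^ γ * R)⁻¹ / (γ + 1)))
          + 4 * ((R ^ γ * R ^ (1 - α))⁻¹ / (γ + (1 - α))) := by
        gcongr
    _ ≤ ξ ^ α * (4 * ((R ^ γ * R)⁻¹ / γ)) + 4 * ((R ^ γ * R ^ (1 - α))⁻¹ / γ) := by
        gcongr <;> linarith
    _ = 4 / γ * ((R ^ γ)⁻¹ * (ξ ^ α / R + 1 / R ^ (1 - α))) := by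
        field_simp

section estimate

variable {θ χ : ℝ → ℝ} {V ξ α γ R x h : ℝ}

theorem abs_mul_truncKernel_sub_le_indicator (hV : 0 ≤ V)
    (hθV : ∀ x' h' : ℝ, |θ (x' + h') - θ x'| ≤ V * (ξ ^ 2 + h' ^ 2) ^ (α / 2))
    (hχ : IsCutoff χ) (hR : 0 < R) (hhR : 4 * |h| ≤ R) (hγ0 : 0 ≤ γ) (hγ1 : γ ≤ 1)
    (hα0 : 0 ≤ α) (hα2 : α ≤ 2) (hξ : 0 ≤ ξ) (y : ℝ) :
    |(θ (x + y) - θ x) * (truncKernel χ R γ (y - h) - truncKernel χ R γ y)|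
      ≤ {y : ℝ | 3 * R / 4 ≤ |y|}.indicator
          (fun y => 27 * |h| * V * (ξ ^ α * |y| ^ (-(2 + γ)) + |y| ^ (α - (2 + γ)))) y := by
  by_cases hy : y ∈ {y : ℝ | 3 * R / 4 ≤ |y|}
  · rw [indicator_of_mem hy, abs_mul]
    replace hy : 3 * R / 4 ≤ |y| := hy
    have hy0 : 0 < |y| := by linarith
    have hθy := (hθV x y).trans
      (mul_le_mul_of_nonneg_left (sq_add_sq_rpow_half_le hξ hα0 hα2) hV)
    have hg := abs_truncKernel_sub_le (R := R) (h := h) hχ hγ0 hγ1 (abs_pos.1 hy0) (by linarith)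
    calc _ ≤ V * (ξ ^ α + |y| ^ α) * (27 * |h| * |y| ^ (-(2 + γ))) :=
          mul_le_mul hθy hg (abs_nonneg _) (by positivity)
      _ = _ := by rw [sub_eq_add_neg α, rpow_add hy0]; ring
  · rw [indicator_of_notMem hy]
    replace hy : |y| < 3 * R / 4 := not_le.1 hy
    rw [truncKernel_eq_zero hχ hR (by linarith [abs_sub y h]),
      truncKernel_eq_zero hχ hR (by linarith), sub_zero, mul_zero, abs_zero]

theorem integrable_and_abs_integral_truncKernel_sub_le (hθ : Continuous θ) (hV : 0 ≤ V)
    (hθV : ∀ x' h' : ℝ, |θ (x' + h') - θ x'| ≤ V * (ξ ^ 2 + h' ^ 2) ^ (α / 2))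
    (hχ : IsCutoff χ) (hR : 0 < R) (hhR : 4 * |h| ≤ R) (hγ0 : 0 < γ) (hγ1 : γ ≤ 1)
    (hα0 : 0 ≤ α) (hα1 : α ≤ 1) (hξ : 0 ≤ ξ) :
    Integrable (fun y => (θ (x + y) - θ x) * (truncKernel χ R γ (y - h) - truncKernel χ R γ y)) ∧
      |∫ y, (θ (x + y) - θ x) * (truncKernel χ R γ (y - h) - truncKernel χ R γ y)|
        ≤ 108 / γ * (|h| * V / R ^ γ) * (ξ ^ α / R + 1 / R ^ (1 - α)) := by
  set S := {y : ℝ | 3 * R / 4 ≤ |y|}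
  have hS : MeasurableSet S := measurableSet_le measurable_const measurable_abs
  obtain ⟨htail_int, htail_le⟩ := integrableOn_and_setIntegral_tail_le hR hγ0 hγ1 hα0 hα1 hξ
  have hmajorant := (integrable_indicator_iff hS).2 (htail_int.const_mul (27 * |h| * V))
  have hbound := ae_of_all volume fun y =>
    (abs_mul_truncKernel_sub_le_indicator (x := x) hV hθV hχ hR hhR hγ0.le hγ1 hα0
      (by linarith) hξ y).trans_eq' (Real.norm_eq_abs _)
  have hmeas : AEStronglyMeasurable
      (fun y => (θ (x + y) - θ x) * (truncKernel χ R γ (y - h) - truncKernel χ R γ y)) := by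
    have := measurable_truncKernel (R := R) (γ := γ) hχ.contDiff.continuous
    exact Measurable.aestronglyMeasurable (by fun_prop)
  refine ⟨hmajorant.mono' hmeas hbound, ?_⟩
  rw [← Real.norm_eq_abs]
  calc _ ≤ _ := norm_integral_le_of_norm_le hmajorant hbound
    _ = 27 * |h| * V * ∫ y in S, (ξ ^ α * |y| ^ (-(2 + γ)) + |y| ^ (α - (2 + γ))) := by
        rw [integral_indicator hS, integral_const_mul]
    _ ≤ 27 * |h| * V * (4 / γ * ((R ^ γ)⁻¹ * (ξ ^ α / R + 1 / R ^ (1 - α)))) := by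
        gcongr
    _ = _ := by ring

end estimate

/-- Estimate (3.4) of the paper: the error term obtained by moving the difference
operator onto the smoothly truncated kernel `g(y) = χ(|y|/R)/|y|^{1+γ}` satisfies
`|∫ (θ(x+y) - θ(x)) (g(y-h) - g(y)) dy| ≤ c₁ c₂ (|h| V / R^γ)(ξ^α/R + 1/R^{1-α})`,
where `V` plays the role of `‖v‖_{L^∞}`. (Note `g(0) = 0` automatically since
`χ(0) = 0`.) -/
theorem statement15 (γ₀ : ℝ) (hγ₀ : γ₀ ∈ Set.Ioo (0:ℝ) 1) :
    ∃ c₁ ≥ (1:ℝ), ∃ c₂ ≥ (1:ℝ), ∀ γ α : ℝ, γ ∈ Set.Ico γ₀ 1 → α ∈ Set.Ioo (0:ℝ) 1 →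
      ∀ ξ : ℝ, 0 ≤ ξ →
      ∀ θ : ℝ → ℝ, (∃ L : NNReal, LipschitzWith L θ) → (∃ B, ∀ x, |θ x| ≤ B) →
      (∀ x, θ (x + 2 * Real.pi) = θ x) →
      ∀ V : ℝ, 0 < V →
      (∀ x' h' : ℝ, |θ (x' + h') - θ x'| ≤ V * (ξ ^ 2 + h' ^ 2) ^ (α / 2)) →
      ∀ x h R : ℝ, h ≠ 0 → 4 * |h| ≤ R →
      ∀ χ : ℝ → ℝ, ContDiff ℝ 1 χ →
        (∀ z : ℝ, |z| ≤ 1 → χ z = 0) → (∀ z : ℝ, 2 ≤ |z| → χ z = 1) →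
        (∀ z : ℝ, |deriv χ z| ≤ 2) →
      Integrable (fun y : ℝ => (θ (x + y) - θ x) *
          (χ (|y - h| / R) / |y - h| ^ (1 + γ) - χ (|y| / R) / |y| ^ (1 + γ))) ∧
      |∫ y : ℝ, (θ (x + y) - θ x) *
          (χ (|y - h| / R) / |y - h| ^ (1 + γ) - χ (|y| / R) / |y| ^ (1 + γ))|
        ≤ c₁ * c₂ * (|h| * V / R ^ γ) * (ξ ^ α / R + 1 / R ^ (1 - α)) := by
  obtain ⟨hγ₀0, hγ₀1⟩ := hγ₀
  refine ⟨108, by norm_num, γ₀⁻¹, one_le_inv₀ hγ₀0 |>.2 hγ₀1.le, ?_⟩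
  rintro γ α ⟨hγ₀γ, hγ1⟩ ⟨hα0, hα1⟩ ξ hξ θ ⟨L, hθ⟩ - - V hV hθV x h R hh hhR χ hχ hχ0 hχ1 hχ'
  have hR : 0 < R := by linarith [abs_pos.2 hh]
  have hγ0 : 0 < γ := hγ₀0.trans_le hγ₀γ
  obtain ⟨hint, hle⟩ := integrable_and_abs_integral_truncKernel_sub_le hθ.continuous hV.le hθV
    ⟨hχ, hχ0, hχ1, hχ'⟩ hR hhR hγ0 hγ1.le hα0.le hα1.le hξ
  refine ⟨hint, hle.trans ?_⟩
  have hγ : 108 / γ ≤ 108 * γ₀⁻¹ := by rw [div_eq_mul_inv]; gcongr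
  gcongr
end
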